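/- Let S(s,j) denote the Stirling numbers of the second kind, defined by S(0,0) = 1, S(s,0) = 0 for s ≥ 1, S(0,j) = 0 for j ≥ 1, and S(s+1,j) = j·S(s,j) + S(s,j−1). Let n and s be natural numbers with s < n, let y ∈ ℝ, set y′ = y/2, and write n_(j) = n(n−1)⋯(n−j+1) for the falling factorial (with n_(0) = 1) and 0^0 = 1. Then 2^{−n+1} Σ_{0 ≤ k ≤ n, k even} C(n,k) k^s exp(i k y) = Σ_{j=0}^{s} S(s,j) · n_(j) · 2^{−j} · exp(i(n+j)y′) · ( cos^{n−j}(y′) + (−1)^j (−i)^{n−j} sin^{n−j}(y′) ), and 2^{−n+1} Σ_{0 ≤ k ≤ n, k odd} C(n,k) k^s exp(i k y) = Σ_{j=0}^{s} S(s,j) · n_(j) · 2^{−j} · exp(i(n+j)y′) · ( cos^{n−j}(y′) − (−1)^j (−i)^{n−j} sin^{n−j}(y′) ). -/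

import Mathlib

open Finset

/-- The Stirling numbers of the second kind, via the recurrence
`S(s+1, j) = j * S(s, j) + S(s, j-1)`. -/
def stirling2 : ℕ → ℕ → ℕ
  | 0, 0 => 1
  | 0, _+1 => 0
  | _+1, 0 => 0
  | s+1, j+1 => (j+1) * stirling2 s (j+1) + stirling2 s j

lemma key_nat (n j m : ℕ) :
    n.choose (j+m) * (j+m).descFactorial j = n.descFactorial j * (n-j).choose m := by
  rcases le_or_gt (j+m) n with hle | hlt
  · have hj : j ≤ n := le_trans (Nat.le_add_right _ _) hle
    have hm : m ≤ n - j := Nat.le_sub_of_add_le (by omega)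
    apply Nat.eq_of_mul_eq_mul_right (Nat.mul_pos (Nat.factorial_pos m) (Nat.factorial_pos (n-(j+m))))
    have h1 : (j+m).descFactorial j * Nat.factorial m = Nat.factorial (j+m) := by
      have := Nat.factorial_mul_descFactorial (Nat.le_add_right j m)
      simpa [Nat.add_sub_cancel_left, mul_comm] using this
    have h2 : n.choose (j+m) * Nat.factorial (j+m) * Nat.factorial (n-(j+m)) = Nat.factorial n :=
      Nat.choose_mul_factorial_mul_factorial hle
    have h3 : (n-j).choose m * Nat.factorial m * Nat.factorial (n-j-m) = Nat.factorial (n-j) :=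
      Nat.choose_mul_factorial_mul_factorial hm
    have h4 : Nat.factorial (n-j) * n.descFactorial j = Nat.factorial n :=
      Nat.factorial_mul_descFactorial hj
    have h5 : n - j - m = n - (j+m) := by omega
    calc n.choose (j+m) * (j+m).descFactorial j * (Nat.factorial m * Nat.factorial (n-(j+m)))
        = n.choose (j+m) * ((j+m).descFactorial j * Nat.factorial m) * Nat.factorial (n-(j+m)) := by
          ring
      _ = Nat.factorial n := by rw [h1, h2]
      _ = n.descFactorial j * (n-j).choose m * (Nat.factorial m * Nat.factorial (n-(j+m))) := by
          rw [← h4, ← h3, h5]; ring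
  · rw [Nat.choose_eq_zero_of_lt hlt]
    rcases le_or_gt j n with hj | hj
    · rw [Nat.choose_eq_zero_of_lt (by omega)]; ring
    · rw [Nat.descFactorial_eq_zero_iff_lt.2 hj]; ring

lemma sum_choose_desc (n j : ℕ) (hj : j ≤ n) (z : ℂ) :
    ∑ k ∈ range (n+1), (n.choose k : ℂ) * (k.descFactorial j : ℂ) * z^k
      = (n.descFactorial j : ℂ) * z^j * (1+z)^(n-j) := by
  have hsplit : n + 1 = j + (n - j + 1) := by omega
  rw [hsplit, Finset.sum_range_add]
  have hz : ∀ k ∈ range j, (n.choose k : ℂ) * (k.descFactorial j : ℂ) * z^k = 0 := by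
    intro k hk
    rw [Nat.descFactorial_eq_zero_iff_lt.2 (mem_range.1 hk)]
    simp
  rw [Finset.sum_congr rfl hz, Finset.sum_const_zero, zero_add]
  have hterm : ∀ m, (n.choose (j+m) : ℂ) * ((j+m).descFactorial j : ℂ) * z^(j+m)
      = (n.descFactorial j : ℂ) * z^j * (((n-j).choose m : ℂ) * z^m) := by
    intro m
    have := key_nat n j m
    have hc : (n.choose (j+m) : ℂ) * ((j+m).descFactorial j : ℂ)
        = (n.descFactorial j : ℂ) * ((n-j).choose m : ℂ) := by
      exact_mod_cast congrArg (Nat.cast : ℕ → ℂ) this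
    rw [pow_add, ← mul_assoc]
    rw [hc]; ring
  rw [Finset.sum_congr rfl (fun m _ => hterm m), ← Finset.mul_sum]
  congr 1
  rw [add_comm (1:ℂ) z, add_pow]
  exact Finset.sum_congr rfl (fun m _ => by rw [one_pow]; ring)

lemma stirling2_eq_zero : ∀ s j : ℕ, s < j → stirling2 s j = 0
  | 0, j+1, _ => rfl
  | s+1, j+1, h => by
    rw [stirling2, stirling2_eq_zero s (j+1) (by omega), stirling2_eq_zero s j (by omega)]
    ring

lemma pow_eq_sum_stirling (s k : ℕ) :
    (k:ℂ)^s = ∑ j ∈ range (s+1), (stirling2 s j : ℂ) * (k.descFactorial j : ℂ) := by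
  induction s with
  | zero => simp [stirling2]
  | succ s ih =>
    have hstep : ∀ j : ℕ, (k:ℂ) * (k.descFactorial j : ℂ)
        = (j:ℂ) * (k.descFactorial j : ℂ) + (k.descFactorial (j+1) : ℂ) := by
      intro j
      rcases le_or_gt j k with hj | hj
      · have : k.descFactorial (j+1) = (k - j) * k.descFactorial j := Nat.descFactorial_succ k j
        rw [this]
        push_cast [hj]
        ring
      · rw [Nat.descFactorial_eq_zero_iff_lt.2 hj,
          Nat.descFactorial_eq_zero_iff_lt.2 (by omega)]
        simp
    have lhs : (k:ℂ)^(s+1) = ∑ j ∈ range (s+1),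
        ((j:ℂ) * (stirling2 s j : ℂ) * (k.descFactorial j : ℂ)
          + (stirling2 s j : ℂ) * (k.descFactorial (j+1) : ℂ)) := by
      rw [pow_succ, ih, Finset.sum_mul, Finset.sum_congr rfl]
      intro j _
      linear_combination (stirling2 s j : ℂ) * hstep j
    rw [lhs, Finset.sum_add_distrib]
    rw [Finset.sum_range_succ' (fun j => (stirling2 (s+1) j : ℂ) * (k.descFactorial j : ℂ)) (s+1)]
    have h0 : (stirling2 (s+1) 0 : ℂ) * (k.descFactorial 0 : ℂ) = 0 := by
      simp [stirling2]
    rw [h0, add_zero]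
    have hsucc : ∀ j, (stirling2 (s+1) (j+1) : ℂ) * (k.descFactorial (j+1) : ℂ)
        = ((j:ℂ)+1) * (stirling2 s (j+1) : ℂ) * (k.descFactorial (j+1) : ℂ)
          + (stirling2 s j : ℂ) * (k.descFactorial (j+1) : ℂ) := by
      intro j
      rw [show stirling2 (s+1) (j+1) = (j+1) * stirling2 s (j+1) + stirling2 s j from rfl]
      push_cast
      ring
    rw [Finset.sum_congr rfl (fun j _ => hsucc j), Finset.sum_add_distrib]
    congr 1
    rw [Finset.sum_range_succ' (fun j => (j:ℂ) * (stirling2 s j : ℂ) * (k.descFactorial j : ℂ)) s,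
      Finset.sum_range_succ, stirling2_eq_zero s (s+1) (by omega)]
    simp only [Nat.cast_zero, zero_mul, mul_zero, add_zero]
    apply Finset.sum_congr rfl
    intro j _
    push_cast
    ring

lemma euler_cos (y' : ℝ) :
    1 + (Complex.exp (Complex.I * y'))^2 = 2 * (Real.cos y' : ℂ) * Complex.exp (Complex.I * y') := by
  have he : Complex.exp (Complex.I * y') = Complex.cos y' + Complex.sin y' * Complex.I := by
    rw [mul_comm, Complex.exp_mul_I]
  rw [Complex.ofReal_cos, he]
  have pyth : (Complex.sin y')^2 + (Complex.cos y')^2 = 1 := Complex.sin_sq_add_cos_sq _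
  linear_combination (-1:ℂ) * pyth + (Complex.sin (y':ℂ))^2 * Complex.I_sq

lemma euler_sin (y' : ℝ) :
    1 - (Complex.exp (Complex.I * y'))^2
      = -2 * (Real.sin y' : ℂ) * Complex.I * Complex.exp (Complex.I * y') := by
  have he : Complex.exp (Complex.I * y') = Complex.cos y' + Complex.sin y' * Complex.I := by
    rw [mul_comm, Complex.exp_mul_I]
  rw [Complex.ofReal_sin, he]
  have pyth : (Complex.sin y')^2 + (Complex.cos y')^2 = 1 := Complex.sin_sq_add_cos_sq _
  linear_combination (-1:ℂ) * pyth + (Complex.sin (y':ℂ))^2 * Complex.I_sq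

lemma exp_pow_eq (n j : ℕ) (y' : ℝ) :
    (Complex.exp (Complex.I * y'))^(n+j) = Complex.exp (Complex.I * ((n:ℂ)+(j:ℂ)) * (y':ℂ)) := by
  rw [← Complex.exp_nat_mul]
  congr 1
  push_cast
  ring

lemma two_zpow (n j : ℕ) (hj : j ≤ n) :
    (2:ℂ)^(-(n:ℤ)) * (2:ℂ)^(n-j) = (2:ℂ)^(-(j:ℤ)) := by
  have : ((2:ℂ))^((n-j : ℕ)) = (2:ℂ)^(((n:ℤ) - (j:ℤ))) := by
    rw [← zpow_natCast]
    congr 1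
    omega
  rw [this, ← zpow_add₀ (by norm_num : (2:ℂ) ≠ 0)]
  congr 1
  omega

lemma piece_cos (n j : ℕ) (hj : j ≤ n) (y' : ℝ) :
    (2:ℂ)^(-(n:ℤ)) * (((Complex.exp (Complex.I * y'))^2)^j
        * (1 + (Complex.exp (Complex.I * y'))^2)^(n-j))
      = (2:ℂ)^(-(j:ℤ)) * Complex.exp (Complex.I * ((n:ℂ)+(j:ℂ)) * (y':ℂ))
        * (Real.cos y' : ℂ)^(n-j) := by
  set e := Complex.exp (Complex.I * (y':ℂ)) with he
  rw [euler_cos, mul_pow, mul_pow]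
  have h1 : (e^2)^j * e^(n-j) = e^(n+j) := by
    rw [← pow_mul, ← pow_add]
    congr 1
    omega
  calc (2:ℂ)^(-(n:ℤ)) * ((e^2)^j * ((2:ℂ)^(n-j) * (Real.cos y' : ℂ)^(n-j) * e^(n-j)))
      = ((2:ℂ)^(-(n:ℤ)) * (2:ℂ)^(n-j)) * ((e^2)^j * e^(n-j)) * (Real.cos y' : ℂ)^(n-j) := by
        ring
    _ = (2:ℂ)^(-(j:ℤ)) * e^(n+j) * (Real.cos y' : ℂ)^(n-j) := by
        rw [two_zpow n j hj, h1]
    _ = _ := by rw [he, exp_pow_eq]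

lemma piece_sin (n j : ℕ) (hj : j ≤ n) (y' : ℝ) :
    (2:ℂ)^(-(n:ℤ)) * ((-((Complex.exp (Complex.I * y'))^2))^j
        * (1 - (Complex.exp (Complex.I * y'))^2)^(n-j))
      = (2:ℂ)^(-(j:ℤ)) * Complex.exp (Complex.I * ((n:ℂ)+(j:ℂ)) * (y':ℂ))
        * ((-1:ℂ)^j * (-Complex.I)^(n-j) * (Real.sin y' : ℂ)^(n-j)) := by
  set e := Complex.exp (Complex.I * (y':ℂ)) with he
  rw [euler_sin]
  have hsplit : (-2 * (Real.sin y' : ℂ) * Complex.I * e)^(n-j)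
      = (2:ℂ)^(n-j) * (-Complex.I)^(n-j) * (Real.sin y' : ℂ)^(n-j) * e^(n-j) := by
    rw [show -2 * (Real.sin y' : ℂ) * Complex.I * e
        = 2 * (-Complex.I) * (Real.sin y' : ℂ) * e by ring, mul_pow, mul_pow, mul_pow]
  rw [hsplit, neg_pow]
  have h1 : (e^2)^j * e^(n-j) = e^(n+j) := by
    rw [← pow_mul, ← pow_add]
    congr 1
    omega
  calc (2:ℂ)^(-(n:ℤ)) * ((-1:ℂ)^j * (e^2)^j
          * ((2:ℂ)^(n-j) * (-Complex.I)^(n-j) * (Real.sin y' : ℂ)^(n-j) * e^(n-j)))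
      = ((2:ℂ)^(-(n:ℤ)) * (2:ℂ)^(n-j)) * ((e^2)^j * e^(n-j))
          * ((-1:ℂ)^j * (-Complex.I)^(n-j) * (Real.sin y' : ℂ)^(n-j)) := by ring
    _ = (2:ℂ)^(-(j:ℤ)) * e^(n+j)
          * ((-1:ℂ)^j * (-Complex.I)^(n-j) * (Real.sin y' : ℂ)^(n-j)) := by
        rw [two_zpow n j hj, h1]
    _ = _ := by rw [he, exp_pow_eq]

lemma F_eq (n s : ℕ) (h : s < n) (w : ℂ) :
    ∑ k ∈ range (n+1), (n.choose k : ℂ) * (k:ℂ)^s * w^k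
      = ∑ j ∈ range (s+1), (stirling2 s j : ℂ)
          * ((n.descFactorial j : ℂ) * w^j * (1+w)^(n-j)) := by
  have h1 : ∀ k ∈ range (n+1), (n.choose k : ℂ) * (k:ℂ)^s * w^k
      = ∑ j ∈ range (s+1), (stirling2 s j : ℂ)
          * ((n.choose k : ℂ) * (k.descFactorial j : ℂ) * w^k) := by
    intro k _
    rw [pow_eq_sum_stirling, Finset.mul_sum, Finset.sum_mul]
    exact Finset.sum_congr rfl (fun j _ => by ring)
  rw [Finset.sum_congr rfl h1, Finset.sum_comm]
  apply Finset.sum_congr rfl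
  intro j hj
  rw [← Finset.mul_sum,
    sum_choose_desc n j (by have := mem_range.1 hj; omega) w]

lemma even_filter (N : ℕ) (g : ℕ → ℂ) :
    ∑ k ∈ (range N).filter (fun k => k % 2 = 0), g k
      = (∑ k ∈ range N, g k + ∑ k ∈ range N, (-1:ℂ)^k * g k) / 2 := by
  rw [Finset.sum_filter, ← Finset.sum_add_distrib, Finset.sum_div]
  apply Finset.sum_congr rfl
  intro k _
  rcases Nat.even_or_odd k with hk | hk
  · rw [if_pos (Nat.even_iff.1 hk), hk.neg_one_pow]
    ring
  · rw [if_neg (by have := Nat.odd_iff.1 hk; omega : ¬ k % 2 = 0), hk.neg_one_pow]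
    ring

lemma odd_filter (N : ℕ) (g : ℕ → ℂ) :
    ∑ k ∈ (range N).filter (fun k => k % 2 = 1), g k
      = (∑ k ∈ range N, g k - ∑ k ∈ range N, (-1:ℂ)^k * g k) / 2 := by
  rw [Finset.sum_filter, ← Finset.sum_sub_distrib, Finset.sum_div]
  apply Finset.sum_congr rfl
  intro k _
  rcases Nat.even_or_odd k with hk | hk
  · rw [if_neg (by have := Nat.even_iff.1 hk; omega : ¬ k % 2 = 1), hk.neg_one_pow]
    ring
  · rw [if_pos (Nat.odd_iff.1 hk), hk.neg_one_pow]
    ring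

theorem stmt_16 (n s : ℕ) (h : s < n) (y y' : ℝ) (hy' : y' = y/2) :
    ((2:ℂ)^(-(n:ℤ)+1) * ∑ k ∈ (Finset.range (n+1)).filter (fun k => k % 2 = 0),
        (n.choose k : ℂ) * (k : ℂ)^s * Complex.exp (Complex.I * (k : ℂ) * (y : ℂ))
      = ∑ j ∈ Finset.range (s+1),
          (stirling2 s j : ℂ) * (n.descFactorial j : ℂ) * (2:ℂ)^(-(j:ℤ))
            * Complex.exp (Complex.I * ((n : ℂ) + (j : ℂ)) * (y' : ℂ))
            * ((Real.cos y' : ℂ)^(n-j)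
               + (-1)^j * (-Complex.I)^(n-j) * (Real.sin y' : ℂ)^(n-j))) ∧
    ((2:ℂ)^(-(n:ℤ)+1) * ∑ k ∈ (Finset.range (n+1)).filter (fun k => k % 2 = 1),
        (n.choose k : ℂ) * (k : ℂ)^s * Complex.exp (Complex.I * (k : ℂ) * (y : ℂ))
      = ∑ j ∈ Finset.range (s+1),
          (stirling2 s j : ℂ) * (n.descFactorial j : ℂ) * (2:ℂ)^(-(j:ℤ))
            * Complex.exp (Complex.I * ((n : ℂ) + (j : ℂ)) * (y' : ℂ))
            * ((Real.cos y' : ℂ)^(n-j)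
               - (-1)^j * (-Complex.I)^(n-j) * (Real.sin y' : ℂ)^(n-j))) := by
  set e := Complex.exp (Complex.I * (y':ℂ)) with he
  have hIy : Complex.exp (Complex.I * (y:ℂ)) = e^2 := by
    rw [he, show Complex.I * (y:ℂ) = ((2:ℕ):ℂ) * (Complex.I * (y':ℂ)) by
      rw [hy']; push_cast; ring, Complex.exp_nat_mul]
  have hz : ∀ k : ℕ, Complex.exp (Complex.I * (k:ℂ) * (y:ℂ)) = (e^2)^k := by
    intro k
    rw [show Complex.I * (k:ℂ) * (y:ℂ) = (k:ℕ) * (Complex.I * (y:ℂ)) by push_cast; ring,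
      Complex.exp_nat_mul, hIy]
  have hA : ∑ k ∈ range (n+1),
      (n.choose k : ℂ) * (k:ℂ)^s * Complex.exp (Complex.I * (k:ℂ) * (y:ℂ))
      = ∑ j ∈ range (s+1), (stirling2 s j : ℂ)
          * ((n.descFactorial j : ℂ) * (e^2)^j * (1+e^2)^(n-j)) := by
    rw [Finset.sum_congr rfl (fun k _ => by rw [hz k]), F_eq n s h (e^2)]
  have hB : ∑ k ∈ range (n+1),
      (-1:ℂ)^k * ((n.choose k : ℂ) * (k:ℂ)^s * Complex.exp (Complex.I * (k:ℂ) * (y:ℂ)))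
      = ∑ j ∈ range (s+1), (stirling2 s j : ℂ)
          * ((n.descFactorial j : ℂ) * (-(e^2))^j * (1-e^2)^(n-j)) := by
    have hterm : ∀ k ∈ range (n+1),
        (-1:ℂ)^k * ((n.choose k : ℂ) * (k:ℂ)^s * Complex.exp (Complex.I * (k:ℂ) * (y:ℂ)))
        = (n.choose k : ℂ) * (k:ℂ)^s * (-(e^2))^k := by
      intro k _
      rw [hz k, neg_pow]
      ring
    rw [Finset.sum_congr rfl hterm, F_eq n s h (-(e^2))]
    apply Finset.sum_congr rfl
    intro j _
    rw [show (1:ℂ) + -(e^2) = 1 - e^2 by ring]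
  have h2 : (2:ℂ)^(-(n:ℤ)+1) / 2 = (2:ℂ)^(-(n:ℤ)) := by
    rw [zpow_add₀ (by norm_num : (2:ℂ) ≠ 0), zpow_one]
    ring
  constructor
  · rw [even_filter, hA, hB, ← Finset.sum_add_distrib,
      show (2:ℂ)^(-(n:ℤ)+1) * ((∑ j ∈ range (s+1), ((stirling2 s j : ℂ)
          * ((n.descFactorial j : ℂ) * (e^2)^j * (1+e^2)^(n-j))
        + (stirling2 s j : ℂ)
          * ((n.descFactorial j : ℂ) * (-(e^2))^j * (1-e^2)^(n-j))))/2)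
        = (2:ℂ)^(-(n:ℤ)) * ∑ j ∈ range (s+1), ((stirling2 s j : ℂ)
          * ((n.descFactorial j : ℂ) * (e^2)^j * (1+e^2)^(n-j))
        + (stirling2 s j : ℂ)
          * ((n.descFactorial j : ℂ) * (-(e^2))^j * (1-e^2)^(n-j))) by
        rw [← h2]; ring,
      Finset.mul_sum]
    apply Finset.sum_congr rfl
    intro j hj
    have hjn : j ≤ n := by have := mem_range.1 hj; omega
    have p1 := piece_cos n j hjn y'
    have p2 := piece_sin n j hjn y'
    rw [← he] at p1 p2
    linear_combination ((stirling2 s j : ℂ) * (n.descFactorial j : ℂ)) * p1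
      + ((stirling2 s j : ℂ) * (n.descFactorial j : ℂ)) * p2
  · rw [odd_filter, hA, hB, ← Finset.sum_sub_distrib,
      show (2:ℂ)^(-(n:ℤ)+1) * ((∑ j ∈ range (s+1), ((stirling2 s j : ℂ)
          * ((n.descFactorial j : ℂ) * (e^2)^j * (1+e^2)^(n-j))
        - (stirling2 s j : ℂ)
          * ((n.descFactorial j : ℂ) * (-(e^2))^j * (1-e^2)^(n-j))))/2)
        = (2:ℂ)^(-(n:ℤ)) * ∑ j ∈ range (s+1), ((stirling2 s j : ℂ)
          * ((n.descFactorial j : ℂ) * (e^2)^j * (1+e^2)^(n-j))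
        - (stirling2 s j : ℂ)
          * ((n.descFactorial j : ℂ) * (-(e^2))^j * (1-e^2)^(n-j))) by
        rw [← h2]; ring,
      Finset.mul_sum]
    apply Finset.sum_congr rfl
    intro j hj
    have hjn : j ≤ n := by have := mem_range.1 hj; omega
    have p1 := piece_cos n j hjn y'
    have p2 := piece_sin n j hjn y'
    rw [← he] at p1 p2
    linear_combination ((stirling2 s j : ℂ) * (n.descFactorial j : ℂ)) * p1
      - ((stirling2 s j : ℂ) * (n.descFactorial j : ℂ)) * p2
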